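/- Let γ : ℝ → ℂ be 2π-periodic and continuously differentiable with deriv γ t ≠ 0 for all t, let φ̃ : ℝ → ℝ be continuous and 2π-periodic, let z ∈ ℂ with z ∉ γ(ℝ), and define ψ(t) := φ̃(t)·|γ'(t)|/γ'(t). Let ℓ : [0, 2π] → ℂ be continuous, differentiable on (0, 2π) with deriv ℓ τ = γ'(τ)/(γ(τ) − z), and satisfying exp(ℓ(τ)) = γ(τ) − z for all τ ∈ [0, 2π] (a continuous logarithm of γ − z along the curve). Let Q be any polynomial with complex coefficients and let R be the polynomial antiderivative of Q with R(z₀) = 0, where z₀ := γ(0). Then −(1/(2π)) ∫₀^{2π} log|γ(τ) − z| · φ̃(τ) · |γ'(τ)| dτ = Im[ (1/(2πi)) ∫₀^{2π} ℓ(τ)·(ψ(τ) − Q(γ(τ)))·γ'(τ) dτ − w(z)·R(z) ], where w(z) := (1/(2πi)) ∫₀^{2π} γ'(τ)/(γ(τ) − z) dτ (an integer equal to (ℓ(2π) − ℓ(0))/(2πi)). (Theorem 3.2, equation (3.9): regularized representation of the Laplace single-layer potential, with the winding factor w(z) replacing the indicator 1_Ω(z) and w(z)·R(z) replacing 1_Ω(z)·∫_{z₀}^{z}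 Q_N.) -/

import Mathlib

open intervalIntegral Real

/-- Every polynomial over `ℂ` has a polynomial antiderivative. -/
lemma exists_antideriv_poly (P : Polynomial ℂ) :
    ∃ S : Polynomial ℂ, Polynomial.derivative S = P := by
  induction P using Polynomial.induction_on' with
  | add p q hp hq =>
    obtain ⟨s, hs⟩ := hp; obtain ⟨t, ht⟩ := hq
    exact ⟨s + t, by simp [hs, ht]⟩
  | monomial n a =>
    refine ⟨Polynomial.monomial (n + 1) (a / ((n : ℂ) + 1)), ?_⟩
    rw [Polynomial.derivative_monomial]
    have h : ((n : ℂ) + 1) ≠ 0 := Nat.cast_add_one_ne_zero n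
    simp only [Nat.add_sub_cancel]
    congr 1
    push_cast
    field_simp

/-- The integral of a polynomial along a closed `C¹` loop vanishes. -/
lemma poly_loop_integral_zero (γ : ℝ → ℂ) (hγ : ContDiff ℝ 1 γ)
    (hγ2π : γ (2 * π) = γ 0) (P : Polynomial ℂ) :
    ∫ τ in (0:ℝ)..(2 * π), P.eval (γ τ) * deriv γ τ = 0 := by
  obtain ⟨S, hS⟩ := exists_antideriv_poly P
  have hγd : ∀ t, HasDerivAt γ (deriv γ t) t :=
    fun t => (hγ.differentiable one_ne_zero t).hasDerivAt
  have hderiv : ∀ τ ∈ Set.uIcc (0:ℝ) (2 * π),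
      HasDerivAt (fun s => S.eval (γ s)) (P.eval (γ τ) * deriv γ τ) τ := by
    intro τ _
    have := (S.hasDerivAt (γ τ)).comp τ (hγd τ)
    simpa [hS, Function.comp_def] using this
  have hint : IntervalIntegrable (fun τ => P.eval (γ τ) * deriv γ τ) MeasureTheory.volume 0 (2 * π) :=
    ((P.continuous_aeval.comp hγ.continuous).mul (hγ.continuous_deriv le_rfl)).intervalIntegrable _ _
  rw [intervalIntegral.integral_eq_sub_of_hasDerivAt hderiv hint, hγ2π, sub_self]

/-- **Regularized representation of the Laplace single-layer potential**
(Theorem 3.2, equation (3.9) of the paper), with the winding factor `w z` replacing the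
indicator `1_Ω(z)` and `w(z)·R(z)` replacing `1_Ω(z)·∫_{z₀}^{z} Q_N`, where `R` is the
polynomial antiderivative of `Q` vanishing at `z₀ = γ(0)`, and `ℓ` is a continuous
logarithm of `γ − z` along the curve. -/
theorem single_layer_potential_regularized
    (γ : ℝ → ℂ) (hper : Function.Periodic γ (2 * π))
    (hγ : ContDiff ℝ 1 γ) (hreg : ∀ t : ℝ, deriv γ t ≠ 0)
    (φ : ℝ → ℝ) (hφc : Continuous φ) (hφper : Function.Periodic φ (2 * π))
    (z : ℂ) (hz : z ∉ Set.range γ)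
    (ψ : ℝ → ℂ)
    (hψ : ∀ t : ℝ, ψ t = (φ t : ℂ) * (‖deriv γ t‖ : ℂ) / deriv γ t)
    (ℓ : ℝ → ℂ) (hℓc : ContinuousOn ℓ (Set.Icc 0 (2 * π)))
    (hℓd : ∀ τ ∈ Set.Ioo (0:ℝ) (2 * π), HasDerivAt ℓ (deriv γ τ / (γ τ - z)) τ)
    (hℓexp : ∀ τ ∈ Set.Icc (0:ℝ) (2 * π), Complex.exp (ℓ τ) = γ τ - z)
    (Q R : Polynomial ℂ) (hR : Polynomial.derivative R = Q) (hR0 : R.eval (γ 0) = 0) :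
    -(1 / (2 * π)) *
        ∫ τ in (0:ℝ)..(2 * π), Real.log ‖γ τ - z‖ * φ τ * ‖deriv γ τ‖
      = ((1 / (2 * (π : ℂ) * Complex.I)) *
            (∫ τ in (0:ℝ)..(2 * π), ℓ τ * (ψ τ - Q.eval (γ τ)) * deriv γ τ)
          - ((1 / (2 * (π : ℂ) * Complex.I)) *
              ∫ τ in (0:ℝ)..(2 * π), deriv γ τ / (γ τ - z)) * R.eval z).im := by
  have hπ : (0:ℝ) < 2 * π := by positivity
  have hγd : ∀ t, HasDerivAt γ (deriv γ t) t :=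
    fun t => (hγ.differentiable one_ne_zero t).hasDerivAt
  have hγ'c : Continuous (deriv γ) := hγ.continuous_deriv le_rfl
  have hγc : Continuous γ := hγ.continuous
  have hne : ∀ t, γ t - z ≠ 0 := fun t => sub_ne_zero.mpr fun h => hz ⟨t, h⟩
  have hγ2π : γ (2 * π) = γ 0 := by simpa using hper 0
  have huIcc : Set.uIcc (0:ℝ) (2 * π) = Set.Icc 0 (2 * π) := Set.uIcc_of_le hπ.le
  have hℓc' : ContinuousOn ℓ (Set.uIcc (0:ℝ) (2 * π)) := by rwa [huIcc]
  -- the real weight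
  set r : ℝ → ℝ := fun τ => φ τ * ‖deriv γ τ‖ with hrdef
  have hrc : Continuous r := hφc.mul (continuous_norm.comp hγ'c)
  have hψγ' : ∀ t, ψ t * deriv γ t = (r t : ℂ) := by
    intro t
    rw [hψ t, div_mul_cancel₀ _ (hreg t), hrdef]
    push_cast
    ring
  -- integrabilities
  have hint1 : IntervalIntegrable (fun τ => ℓ τ * (r τ : ℂ))
      MeasureTheory.volume 0 (2 * π) :=
    (hℓc'.mul (Complex.continuous_ofReal.comp hrc).continuousOn).intervalIntegrable
  have hint2 : IntervalIntegrable (fun τ => ℓ τ * Q.eval (γ τ) * deriv γ τ)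
      MeasureTheory.volume 0 (2 * π) :=
    ((hℓc'.mul ((Q.continuous_aeval.comp hγc).continuousOn)).mul
      hγ'c.continuousOn).intervalIntegrable
  -- split the main integral
  have hsplit : (∫ τ in (0:ℝ)..(2 * π), ℓ τ * (ψ τ - Q.eval (γ τ)) * deriv γ τ)
      = (∫ τ in (0:ℝ)..(2 * π), ℓ τ * (r τ : ℂ))
        - ∫ τ in (0:ℝ)..(2 * π), ℓ τ * Q.eval (γ τ) * deriv γ τ := by
    rw [← intervalIntegral.integral_sub hint1 hint2]
    apply intervalIntegral.integral_congr
    intro τ _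
    dsimp only
    rw [← hψγ' τ]
    ring
  -- integration by parts : ∫ ℓ Q(γ) γ' = - ∫ (γ'/(γ-z)) R(γ)
  have hRγd : ∀ t, HasDerivAt (fun s => R.eval (γ s)) (Q.eval (γ t) * deriv γ t) t := by
    intro t
    have := (R.hasDerivAt (γ t)).comp t (hγd t)
    simpa [hR, Function.comp_def] using this
  have hGder : ∀ τ ∈ Set.Ioo (0:ℝ) (2 * π),
      HasDerivAt (fun s => ℓ s * R.eval (γ s))
        (deriv γ τ / (γ τ - z) * R.eval (γ τ) + ℓ τ * (Q.eval (γ τ) * deriv γ τ)) τ :=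
    fun τ hτ => (hℓd τ hτ).mul (hRγd τ)
  have hGcont : ContinuousOn (fun s => ℓ s * R.eval (γ s)) (Set.Icc 0 (2 * π)) :=
    hℓc.mul ((R.continuous_aeval.comp hγc).continuousOn)
  have hint3 : IntervalIntegrable (fun τ => deriv γ τ / (γ τ - z) * R.eval (γ τ))
      MeasureTheory.volume 0 (2 * π) :=
    ((hγ'c.div (hγc.sub continuous_const) hne).mul
      (R.continuous_aeval.comp hγc)).intervalIntegrable _ _
  have hparts : (∫ τ in (0:ℝ)..(2 * π),
        (deriv γ τ / (γ τ - z) * R.eval (γ τ) + ℓ τ * (Q.eval (γ τ) * deriv γ τ)))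
      = 0 := by
    rw [intervalIntegral.integral_eq_sub_of_hasDerivAt_of_le hπ.le hGcont hGder
      (hint3.add (by simpa [mul_assoc] using hint2))]
    simp [hγ2π, hR0]
  have hparts' : (∫ τ in (0:ℝ)..(2 * π), ℓ τ * Q.eval (γ τ) * deriv γ τ)
      = - ∫ τ in (0:ℝ)..(2 * π), deriv γ τ / (γ τ - z) * R.eval (γ τ) := by
    have := intervalIntegral.integral_add hint3 (by simpa [mul_assoc] using hint2)
    rw [hparts] at this
    have h2 : (∫ τ in (0:ℝ)..(2 * π), ℓ τ * (Q.eval (γ τ) * deriv γ τ))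
        = ∫ τ in (0:ℝ)..(2 * π), ℓ τ * Q.eval (γ τ) * deriv γ τ := by
      apply intervalIntegral.integral_congr; intro τ _; dsimp only; ring
    linear_combination -this - h2
  -- divided difference polynomial
  obtain ⟨P, hP⟩ : ∃ P, R - Polynomial.C (R.eval z) = (Polynomial.X - Polynomial.C z) * P :=
    Polynomial.X_sub_C_dvd_sub_C_eval
  have hintw : IntervalIntegrable (fun τ => deriv γ τ / (γ τ - z))
      MeasureTheory.volume 0 (2 * π) :=
    (hγ'c.div (hγc.sub continuous_const) hne).intervalIntegrable _ _
  have hkey : (∫ τ in (0:ℝ)..(2 * π), deriv γ τ / (γ τ - z) * R.eval (γ τ))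
      = R.eval z * ∫ τ in (0:ℝ)..(2 * π), deriv γ τ / (γ τ - z) := by
    have hz0 := poly_loop_integral_zero γ hγ hγ2π P
    have hcongr : (∫ τ in (0:ℝ)..(2 * π), P.eval (γ τ) * deriv γ τ)
        = ∫ τ in (0:ℝ)..(2 * π),
            (deriv γ τ / (γ τ - z) * R.eval (γ τ)
              - R.eval z * (deriv γ τ / (γ τ - z))) := by
      apply intervalIntegral.integral_congr
      intro τ _
      dsimp only
      have h1 : R.eval (γ τ) - R.eval z = (γ τ - z) * P.eval (γ τ) := by
        have := congrArg (Polynomial.eval (γ τ)) hP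
        simpa using this
      have h2 : deriv γ τ / (γ τ - z) * (R.eval (γ τ) - R.eval z)
          = P.eval (γ τ) * deriv γ τ := by
        rw [h1]
        field_simp [hne τ]
      linear_combination -h2
    rw [hcongr, intervalIntegral.integral_sub hint3 (hintw.const_mul _),
      intervalIntegral.integral_const_mul] at hz0
    linear_combination hz0
  -- assemble the complex sides
  set I1 : ℂ := ∫ τ in (0:ℝ)..(2 * π), ℓ τ * (r τ : ℂ) with hI1
  set Iw : ℂ := ∫ τ in (0:ℝ)..(2 * π), deriv γ τ / (γ τ - z) with hIwdef
  have hRHS : ((1 / (2 * (π : ℂ) * Complex.I)) *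
            (∫ τ in (0:ℝ)..(2 * π), ℓ τ * (ψ τ - Q.eval (γ τ)) * deriv γ τ)
          - ((1 / (2 * (π : ℂ) * Complex.I)) * Iw) * R.eval z)
      = (1 / (2 * (π : ℂ) * Complex.I)) * I1 := by
    rw [hsplit, hparts', hkey]
    ring
  rw [hRHS]
  -- imaginary part computation
  have hπC : (2 * (π : ℂ) * Complex.I) ≠ 0 := by
    simp [Complex.I_ne_zero, Complex.ofReal_ne_zero, Real.pi_ne_zero]
  have hfac : (1 / (2 * (π : ℂ) * Complex.I)) = ((-(1 / (2 * π)) : ℝ) : ℂ) * Complex.I := by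
    have hπ' : (π:ℂ) ≠ 0 := Complex.ofReal_ne_zero.mpr Real.pi_ne_zero
    rw [div_eq_iff hπC]
    push_cast
    have hI := Complex.I_mul_I
    field_simp
    linear_combination hI
  rw [hfac, mul_assoc, mul_comm Complex.I I1, Complex.im_ofReal_mul, Complex.mul_I_im]
  -- real part of I1
  have hre : I1.re = ∫ τ in (0:ℝ)..(2 * π),
      Real.log ‖γ τ - z‖ * φ τ * ‖deriv γ τ‖ := by
    have := Complex.reCLM.intervalIntegral_comp_comm hint1
    simp only [Complex.reCLM_apply] at this
    rw [hI1, ← this]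
    apply intervalIntegral.integral_congr
    intro τ hτ
    have hτ' : τ ∈ Set.Icc (0:ℝ) (2 * π) := huIcc ▸ hτ
    have hlog : (ℓ τ).re = Real.log ‖γ τ - z‖ := by
      have h1 : ‖Complex.exp (ℓ τ)‖ = ‖γ τ - z‖ := by
        rw [hℓexp τ hτ']
      rw [Complex.norm_exp] at h1
      rw [← h1, Real.log_exp]
    simp only [Complex.mul_re, Complex.ofReal_re, Complex.ofReal_im, mul_zero, sub_zero, hlog,
      hrdef]
    ring
  rw [hre]
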